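/- Let G be a finite group, p : E → G a surjective group homomorphism with kernel contained in the center of E, and V a finite-dimensional complex vector space. Suppose ρ, ρ' : E → GL(V) are representations that descend to projective representations ρ̄, ρ̄' : G → PGL(V) (i.e., π ∘ ρ and π ∘ ρ' factor through p). Then ρ̄ and ρ̄' are similar (conjugate by an element of PGL(V)) if and only if there exists a group homomorphism ε : E → C^× such that ρ is equivalent, as a linear representation, to ε·ρ'. -/

import Mathlib

/-!
The kernel of `GL(V) → PGL(V)` is the center of `GL(V)`, i.e. the nonzero scalars. Hence `L̄`
conjugates `ρ̄` to `ρ̄'` exactly when `L ρ(e) L⁻¹ = ε(e) ρ'(e)` for some scalars `ε(e)`, and since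
an invertible map determines the scalar multiplying it, evaluating at `e₁ e₂` shows that `ε` is
multiplicative.
-/

namespace Module.End

section CommRing

variable {R M : Type*} [CommRing R] [AddCommGroup M] [Module R M] [Module.Free R M]
  [Module.Finite R M]

theorem units_mem_center_iff {z : (End R M)ˣ} :
    z ∈ Subgroup.center (End R M)ˣ ↔ ∃ c : Rˣ, (z : End R M) = (c : R) • 1 := by
  classical
  let b := Free.chooseBasis R M
  let e : (End R M)ˣ ≃* GL (Free.ChooseBasisIndex R M) R :=
    Units.mapEquiv (algEquivMatrix b).toMulEquiv
  refine (MulEquivClass.apply_mem_center_iff e).symm.trans ?_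
  change e z ∈ Subgroup.center _ ↔ _
  rw [Matrix.GeneralLinearGroup.center_eq_range_scalar]
  refine exists_congr fun c => ?_
  rw [eq_comm, Units.ext_iff, ← Algebra.algebraMap_eq_smul_one,
    ← (algEquivMatrix b).injective.eq_iff, AlgEquiv.commutes]
  rfl

theorem mk'_center_eq_mk'_iff {x y : (End R M)ˣ} :
    QuotientGroup.mk' (Subgroup.center (End R M)ˣ) x =
        QuotientGroup.mk' (Subgroup.center (End R M)ˣ) y ↔
      ∃ c : Rˣ, (x : End R M) = (c : R) • (y : End R M) := by
  rw [eq_comm, QuotientGroup.mk'_eq_mk']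
  constructor
  · rintro ⟨z, hz, rfl⟩
    obtain ⟨c, hc⟩ := units_mem_center_iff.mp hz
    exact ⟨c, by rw [Units.val_mul, hc, mul_smul_one]⟩
  · rintro ⟨c, hc⟩
    refine ⟨c • 1, units_mem_center_iff.mpr ⟨c, by simp [Units.smul_def]⟩, Units.ext ?_⟩
    simp [Units.smul_def, hc]

end CommRing

variable {K V : Type*} [Field K] [AddCommGroup V] [Module K V]

theorem exists_monoidHom_of_forall_exists_smul {E : Type*} [Monoid E] {ρ σ : E →* (End K V)ˣ}
    (h : ∀ e, ∃ c : Kˣ, (ρ e : End K V) = (c : K) • (σ e : End K V)) :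
    ∃ ε : E →* Kˣ, ∀ e, (ρ e : End K V) = (ε e : K) • (σ e : End K V) := by
  rcases subsingleton_or_nontrivial V with _ | _
  · exact ⟨1, fun e => Subsingleton.elim _ _⟩
  choose c hc using h
  have smul_cancel : ∀ {a b : K} (x : (End K V)ˣ), a • (x : End K V) = b • x → a = b := by
    intro a b x hab
    apply (algebraMap K (End K V)).injective
    simpa [Algebra.algebraMap_eq_smul_one, smul_mul_assoc] using congr($hab * ↑x⁻¹)
  refine ⟨MonoidHom.mk' c fun e₁ e₂ => Units.ext (smul_cancel (σ (e₁ * e₂)) ?_), hc⟩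
  rw [← hc, map_mul, map_mul, Units.val_mul, Units.val_mul, hc, hc, Units.val_mul,
    smul_mul_smul_comm]

end Module.End

theorem forall_conj_eq_iff_of_lift {E G H Q : Type*} [Monoid E] [Monoid G] [Group H] [Group Q]
    {p : E →* G} (hp : Function.Surjective p) {f : H →* Q} {ρ ρ' : E →* H} {ρbar ρbar' : G →* Q}
    (h : ρbar.comp p = f.comp ρ) (h' : ρbar'.comp p = f.comp ρ') (L : H) :
    (∀ g, f L * ρbar g * (f L)⁻¹ = ρbar' g) ↔ ∀ e, f (L * ρ e * L⁻¹) = f (ρ' e) := by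
  rw [hp.forall]
  simp only [← MonoidHom.comp_apply, h, h', map_mul, map_inv]

theorem stmt9_general (E G : Type*) [Group E] [Group G]
    (V : Type*) [AddCommGroup V] [Module ℂ V] [FiniteDimensional ℂ V]
    (p : E →* G) (hp : Function.Surjective p)
    (ρ ρ' : E →* (Module.End ℂ V)ˣ)
    (ρbar ρbar' : G →* ((Module.End ℂ V)ˣ ⧸ Subgroup.center (Module.End ℂ V)ˣ))
    (hlift : ρbar.comp p = (QuotientGroup.mk' (Subgroup.center (Module.End ℂ V)ˣ)).comp ρ)
    (hlift' : ρbar'.comp p =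
      (QuotientGroup.mk' (Subgroup.center (Module.End ℂ V)ˣ)).comp ρ') :
    (∃ L : (Module.End ℂ V)ˣ, ∀ g : G,
        QuotientGroup.mk' (Subgroup.center (Module.End ℂ V)ˣ) L * ρbar g *
          (QuotientGroup.mk' (Subgroup.center (Module.End ℂ V)ˣ) L)⁻¹ = ρbar' g) ↔
    (∃ ε : E →* ℂˣ, ∃ L : (Module.End ℂ V)ˣ, ∀ e : E,
        (L * ρ e * L⁻¹).val = (ε e : ℂ) • (ρ' e).val) := by
  simp only [forall_conj_eq_iff_of_lift hp hlift hlift', Module.End.mk'_center_eq_mk'_iff]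
  constructor
  · rintro ⟨L, hL⟩
    obtain ⟨ε, hε⟩ := Module.End.exists_monoidHom_of_forall_exists_smul
      (ρ := (MulAut.conj L).toMonoidHom.comp ρ) hL
    exact ⟨ε, L, hε⟩
  · rintro ⟨ε, L, hL⟩
    exact ⟨L, fun e => ⟨ε e, hL e⟩⟩

/-- Given a surjection p : E → G with central kernel and two linear representations
ρ, ρ' of E on V that descend to projective representations ρ̄, ρ̄' of G on PGL(V),
ρ̄ and ρ̄' are similar iff there is a homomorphism ε : E → ℂ^× such that ρ is
equivalent to ε·ρ'. -/
theorem stmt9 (E G : Type*) [Group E] [Finite E] [Group G] [Finite G]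
    (V : Type*) [AddCommGroup V] [Module ℂ V] [FiniteDimensional ℂ V]
    (p : E →* G) (hp : Function.Surjective p) (hker : p.ker ≤ Subgroup.center E)
    (ρ ρ' : E →* (Module.End ℂ V)ˣ)
    (ρbar ρbar' : G →* ((Module.End ℂ V)ˣ ⧸ Subgroup.center (Module.End ℂ V)ˣ))
    (hlift : ρbar.comp p = (QuotientGroup.mk' (Subgroup.center (Module.End ℂ V)ˣ)).comp ρ)
    (hlift' : ρbar'.comp p =
      (QuotientGroup.mk' (Subgroup.center (Module.End ℂ V)ˣ)).comp ρ') :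
    (∃ L : (Module.End ℂ V)ˣ, ∀ g : G,
        QuotientGroup.mk' (Subgroup.center (Module.End ℂ V)ˣ) L * ρbar g *
          (QuotientGroup.mk' (Subgroup.center (Module.End ℂ V)ˣ) L)⁻¹ = ρbar' g) ↔
    (∃ ε : E →* ℂˣ, ∃ L : (Module.End ℂ V)ˣ, ∀ e : E,
        (L * ρ e * L⁻¹).val = (ε e : ℂ) • (ρ' e).val) :=
  stmt9_general E G V p hp ρ ρ' ρbar ρbar' hlift hlift'
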